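/- arXiv:1608.08489 — 2 statements merged into one kernel-verified Lean document; each statement's English description precedes it below -/
import Mathlib

section
/- The map Fixed_M, which sends an ordered partition P to the meet of P with a fixed choice of ordered orbit partition of the pointwise stabilizer in M of the singleton cells of P, satisfies Fixed_M(P) is finer than P and Fixed_M(P^g) = (Fixed_M(P))^g for all g in the normalizer context considered; in particular Fixed_M is a refiner. -/
variable {Ω : Type*} [DecidableEq Ω] [Fintype Ω]

/-- The action of a permutation on an ordered partition: apply `g` to every cell. -/
def actP (P : List (Finset Ω)) (g : Equiv.Perm Ω) : List (Finset Ω) :=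
  P.map (Finset.image g)

/-- The meet of two ordered partitions. -/
def meetP (P Q : List (Finset Ω)) : List (Finset Ω) :=
  (P.flatMap (fun Δ => Q.map (fun Δ' => Δ ∩ Δ'))).filter (fun Δ => Δ.Nonempty)

/-- `Q` is finer than `P`. -/
def Finer (Q P : List (Finset Ω)) : Prop :=
  ∀ Δ ∈ Q, ∃ Δ' ∈ P, Δ ⊆ Δ'

/-- The points lying in singleton cells of `P`. -/
def singPts (P : List (Finset Ω)) : Set Ω := {a | ({a} : Finset Ω) ∈ P}

/-- The pointwise stabilizer in `M` of the points in singleton cells of `P`. -/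
def ptStab (M : Subgroup (Equiv.Perm Ω)) (P : List (Finset Ω)) : Subgroup (Equiv.Perm Ω) :=
  M ⊓ ⨅ a ∈ singPts P, MulAction.stabilizer (Equiv.Perm Ω) a

/-- `O` is an ordered orbit partition for the subgroup `N`: its cells are exactly the
orbits of `N` on `Ω`, listed without repetition in some order. -/
def IsOrbPart (N : Subgroup (Equiv.Perm Ω)) (O : List (Finset Ω)) : Prop :=
  O.Nodup ∧ (∀ Δ ∈ O, ∃ a : Ω, (Δ : Set Ω) = {γ | ∃ h ∈ N, h a = γ}) ∧
    ∀ a : Ω, ∃ Δ ∈ O, (Δ : Set Ω) = {γ | ∃ h ∈ N, h a = γ}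

/-!
The choice of orbit order is made `M`-equivariant by transport: pick one representative `P₀` in
each `M`-orbit of ordered partitions, meet it with any ordered orbit partition of its pointwise
stabiliser `M₀`, and set `Fixed_M (P₀ ^ g) := (Fixed_M P₀) ^ g`. This is well defined because an
element of `M` fixing `P₀` fixes its singleton points, hence lies in `M₀` and maps every
`M₀`-orbit to itself. It has the required shape because conjugation by `g ∈ M` carries the
pointwise stabiliser of `P` to that of `P ^ g`, and its orbits to the `g`-images of the orbits.
-/

theorem MulAction.exists_equivariant_selection {G α β : Type*} [Group G] [MulAction G α]
    [MulAction G β] (S : α → Set β) (hS : ∀ (g : G) x, ∀ y ∈ S x, g • y ∈ S (g • x))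
    (hfix : ∀ x, ∃ y ∈ S x, ∀ g : G, g • x = x → g • y = y) :
    ∃ f : α → β, (∀ x, f x ∈ S x) ∧ ∀ (g : G) x, f (g • x) = g • f x := by
  choose y hyS hyfix using hfix
  let r : α → α := fun x => (⟦x⟧ : orbitRel.Quotient G α).out
  have hr_smul (g : G) (x : α) : r (g • x) = r x :=
    congrArg Quotient.out (Quotient.sound (mem_orbit x g))
  have hr (x : α) : ∃ g : G, g • r x = x :=
    mem_orbit_symm.mp (Quotient.exact (Quotient.out_eq (⟦x⟧ : orbitRel.Quotient G α)))
  choose σ hσ using hr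
  refine ⟨fun x => σ x • y (r x),
    fun x => by simpa only [hσ x] using hS (σ x) _ _ (hyS (r x)), fun g x => ?_⟩
  have hstab : ((σ (g • x))⁻¹ * g * σ x) • r x = r x := by
    rw [mul_smul, mul_smul, hσ, inv_smul_eq_iff, ← hr_smul g x, hσ]
  calc σ (g • x) • y (r (g • x))
      = σ (g • x) • ((σ (g • x))⁻¹ * g * σ x) • y (r x) := by rw [hr_smul, hyfix _ _ hstab]
    _ = g • σ x • y (r x) := by rw [← mul_smul, ← mul_smul]; group

section
variable {α : Type*}

theorem mem_ptStab {M : Subgroup (Equiv.Perm α)} {P : List (Finset α)} {h : Equiv.Perm α} :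
    h ∈ ptStab M P ↔ h ∈ M ∧ ∀ a ∈ singPts P, h a = a := by
  simp [ptStab, Subgroup.mem_iInf, MulAction.mem_stabilizer_iff, Equiv.Perm.smul_def]

theorem setOf_exists_mem_apply_eq (N : Subgroup (Equiv.Perm α)) (a : α) :
    {γ | ∃ h ∈ N, h a = γ} = MulAction.orbit N a := by
  ext γ
  simp [MulAction.mem_orbit_iff, Subgroup.smul_def, Equiv.Perm.smul_def]

theorem isOrbPart_iff {N : Subgroup (Equiv.Perm α)} {O : List (Finset α)} :
    IsOrbPart N O ↔ O.Nodup ∧ (∀ Δ ∈ O, ∃ a, (Δ : Set α) = MulAction.orbit N a) ∧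
      ∀ a, ∃ Δ ∈ O, (Δ : Set α) = MulAction.orbit N a := by
  simp only [IsOrbPart, setOf_exists_mem_apply_eq]

theorem image_orbit_subgroup_conj (N : Subgroup (Equiv.Perm α)) (g : Equiv.Perm α) (a : α) :
    g '' MulAction.orbit N a = MulAction.orbit (N.map (MulAut.conj g).toMonoidHom) (g a) := by
  simp only [← setOf_exists_mem_apply_eq]
  ext γ
  simp [Equiv.eq_symm_apply]

theorem image_orbit_of_mem {N : Subgroup (Equiv.Perm α)} {h : Equiv.Perm α} (hh : h ∈ N)
    (a : α) : h '' MulAction.orbit N a = MulAction.orbit N a :=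
  MulAction.smul_orbit (⟨h, hh⟩ : N) a

noncomputable def orbitFinset [Finite α] (N : Subgroup (Equiv.Perm α)) (a : α) : Finset α :=
  (Set.toFinite (MulAction.orbit N a)).toFinset

variable [DecidableEq α]

theorem actP_one (P : List (Finset α)) : actP P 1 = P :=
  List.map_id'' (fun _ => Finset.image_id) P

theorem actP_actP (P : List (Finset α)) (g h : Equiv.Perm α) :
    actP (actP P g) h = actP P (h * g) := by
  simp [actP, Function.comp_def, Finset.image_image]

instance : MulAction (Equiv.Perm α) (List (Finset α)) where
  smul g P := actP P g
  one_smul := actP_one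
  mul_smul g h P := (actP_actP P h g).symm

theorem actP_eq_self_iff {P : List (Finset α)} {g : Equiv.Perm α} :
    actP P g = P ↔ ∀ Δ ∈ P, Δ.image g = Δ := by
  simpa [actP] using List.map_inj_left (f := Finset.image g) (g := id) (l := P)

theorem actP_meetP (P Q : List (Finset α)) (g : Equiv.Perm α) :
    actP (meetP P Q) g = meetP (actP P g) (actP Q g) := by
  have hne : (fun Δ : Finset α => decide Δ.Nonempty) ∘ Finset.image g =
      fun Δ => decide Δ.Nonempty := by
    funext Δ; simp
  rw [meetP, meetP, actP, ← hne, ← List.filter_map]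
  simp [actP, List.map_flatMap, List.flatMap_map, Function.comp_def,
    Finset.image_inter _ _ g.injective]

theorem finer_meetP_left (P Q : List (Finset α)) : Finer (meetP P Q) P := by
  intro Δ hΔ
  simp only [meetP, List.mem_filter, List.mem_flatMap, List.mem_map] at hΔ
  obtain ⟨⟨Δ₁, hΔ₁, Δ₂, -, rfl⟩, -⟩ := hΔ
  exact ⟨Δ₁, hΔ₁, Finset.inter_subset_left⟩

theorem mem_singPts_actP {P : List (Finset α)} {g : Equiv.Perm α} {a : α} :
    a ∈ singPts (actP P g) ↔ g⁻¹ a ∈ singPts P := by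
  have : ({a} : Finset α) = Finset.image g {g⁻¹ a} := by simp
  rw [singPts, Set.mem_ofPred_eq, actP, this,
    List.mem_map_of_injective (Finset.image_injective g.injective)]
  rfl

theorem ptStab_actP {M : Subgroup (Equiv.Perm α)} (P : List (Finset α)) {g : Equiv.Perm α}
    (hg : g ∈ M) : ptStab M (actP P g) = (ptStab M P).map (MulAut.conj g).toMonoidHom := by
  ext h
  rw [Subgroup.mem_map_equiv, MulAut.conj_symm_apply, mem_ptStab, mem_ptStab,
    Subgroup.mul_mem_cancel_right M hg, Subgroup.mul_mem_cancel_left M (inv_mem hg)]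
  refine and_congr_right fun _ => ⟨fun hfix b hb => ?_, fun hfix a ha => ?_⟩
  · have := hfix (g b) (by simpa [mem_singPts_actP] using hb)
    simp [Equiv.Perm.mul_apply, this]
  · simpa [Equiv.Perm.mul_apply] using hfix _ (mem_singPts_actP.mp ha)

theorem mem_ptStab_of_actP_eq_self {M : Subgroup (Equiv.Perm α)} {P : List (Finset α)}
    {h : Equiv.Perm α} (hM : h ∈ M) (hP : actP P h = P) : h ∈ ptStab M P :=
  mem_ptStab.mpr ⟨hM, fun a ha => by simpa using actP_eq_self_iff.mp hP {a} ha⟩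

theorem isOrbPart_actP {N : Subgroup (Equiv.Perm α)} {O : List (Finset α)}
    (hO : IsOrbPart N O) (g : Equiv.Perm α) :
    IsOrbPart (N.map (MulAut.conj g).toMonoidHom) (actP O g) := by
  obtain ⟨hnd, hcell, hcover⟩ := isOrbPart_iff.mp hO
  refine isOrbPart_iff.mpr ⟨hnd.map (Finset.image_injective g.injective), ?_, fun a => ?_⟩
  · simp only [actP, List.mem_map, forall_exists_index, and_imp, forall_apply_eq_imp_iff₂]
    intro Δ hΔ
    obtain ⟨a, ha⟩ := hcell Δ hΔ
    exact ⟨g a, by rw [Finset.coe_image, ha, image_orbit_subgroup_conj]⟩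
  · obtain ⟨Δ, hΔ, ha⟩ := hcover (g⁻¹ a)
    refine ⟨Δ.image g, List.mem_map_of_mem hΔ, ?_⟩
    rw [Finset.coe_image, ha, image_orbit_subgroup_conj]
    simp

noncomputable def orbitList [Fintype α] (N : Subgroup (Equiv.Perm α)) : List (Finset α) :=
  (Finset.univ.image (orbitFinset N)).toList

theorem isOrbPart_orbitList [Fintype α] (N : Subgroup (Equiv.Perm α)) :
    IsOrbPart N (orbitList N) := by
  refine isOrbPart_iff.mpr ⟨Finset.nodup_toList _, fun Δ hΔ => ?_, fun a => ?_⟩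
  · obtain ⟨a, -, rfl⟩ := Finset.mem_image.mp (Finset.mem_toList.mp hΔ)
    exact ⟨a, Set.Finite.coe_toFinset _⟩
  · exact ⟨orbitFinset N a, Finset.mem_toList.mpr (Finset.mem_image_of_mem _ (Finset.mem_univ a)),
      Set.Finite.coe_toFinset _⟩

theorem actP_orbitList_of_mem [Fintype α] {N : Subgroup (Equiv.Perm α)} {h : Equiv.Perm α}
    (hh : h ∈ N) : actP (orbitList N) h = orbitList N := by
  refine actP_eq_self_iff.mpr fun Δ hΔ => Finset.coe_injective ?_
  obtain ⟨a, -, rfl⟩ := Finset.mem_image.mp (Finset.mem_toList.mp hΔ)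
  rw [Finset.coe_image, orbitFinset, Set.Finite.coe_toFinset, image_orbit_of_mem hh]

def fixedCandidates (M : Subgroup (Equiv.Perm α)) (P : List (Finset α)) :
    Set (List (Finset α)) :=
  {Q | ∃ O, IsOrbPart (ptStab M P) O ∧ Q = meetP P O}

theorem actP_mem_fixedCandidates {M : Subgroup (Equiv.Perm α)} {P Q : List (Finset α)}
    {g : Equiv.Perm α} (hg : g ∈ M) (hQ : Q ∈ fixedCandidates M P) :
    actP Q g ∈ fixedCandidates M (actP P g) := by
  obtain ⟨O, hO, rfl⟩ := hQ
  exact ⟨actP O g, ptStab_actP P hg ▸ isOrbPart_actP hO g, actP_meetP P O g⟩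

theorem exists_mem_fixedCandidates_actP_eq_self [Fintype α] (M : Subgroup (Equiv.Perm α))
    (P : List (Finset α)) :
    ∃ Q ∈ fixedCandidates M P, ∀ h ∈ M, actP P h = P → actP Q h = Q := by
  refine ⟨meetP P (orbitList (ptStab M P)), ⟨_, isOrbPart_orbitList _, rfl⟩, fun h hM hP => ?_⟩
  rw [actP_meetP, hP, actP_orbitList_of_mem (mem_ptStab_of_actP_eq_self hM hP)]

end

/-- There is a map `Fixed_M` sending an ordered partition `P` to the meet of `P` with a
(fixed choice of) ordered orbit partition of the pointwise stabilizer in `M` of the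
singleton cells of `P`, which satisfies `Fixed_M P ≼ P` and
`Fixed_M (P^g) = (Fixed_M P)^g` for all `g ∈ M`; in particular `Fixed_M` is a refiner. -/
theorem fixed_is_refiner (M : Subgroup (Equiv.Perm Ω)) :
    ∃ f : List (Finset Ω) → List (Finset Ω),
      (∀ P, ∃ O, IsOrbPart (ptStab M P) O ∧ f P = meetP P O) ∧
      (∀ P, Finer (f P) P) ∧
      (∀ P, ∀ g ∈ M, f (actP P g) = actP (f P) g) := by
  obtain ⟨f, hf_mem, hf_equiv⟩ := MulAction.exists_equivariant_selection (G := M)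
    (fixedCandidates M) (fun g _ _ hQ => actP_mem_fixedCandidates g.2 hQ)
    (fun P => (exists_mem_fixedCandidates_actP_eq_self M P).imp
      fun _ ⟨hQ, hfix⟩ => ⟨hQ, fun g => hfix g g.2⟩)
  refine ⟨f, hf_mem, fun P => ?_, fun P g hg => hf_equiv ⟨g, hg⟩ P⟩
  obtain ⟨O, -, hO⟩ := hf_mem P
  exact hO ▸ finer_meetP_left P O
end

section
/- If β ∈ α^H and the orbital graph Γ(H,Ω,(α,β)) has strictly more than n(n−2) arcs, where n = |α^H|, then for every pair of distinct points γ,δ ∈ α^H the pair (γ,δ) is an arc, i.e., Γ is the complete digraph on α^H. -/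
variable {Ω : Type*} [Fintype Ω] [DecidableEq Ω]

/-- The arc set of the orbital graph of `H` with base-pair `(α, β)`:
`{(α^h, β^h) : h ∈ H}`. -/
def orbArcs (H : Subgroup (Equiv.Perm Ω)) (α β : Ω) : Set (Ω × Ω) :=
  {p | ∃ h ∈ H, h α = p.1 ∧ h β = p.2}

/-- The orbit of `α` under `H`. -/
def orb (H : Subgroup (Equiv.Perm Ω)) (α : Ω) : Set Ω :=
  {γ | ∃ h ∈ H, h α = γ}

/-- The orbit of `β` under the stabilizer `H_α`. -/
def stabOrb (H : Subgroup (Equiv.Perm Ω)) (α β : Ω) : Set Ω :=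
  {γ | ∃ h ∈ H, h α = α ∧ h β = γ}

/-!
Every arc of `Γ` has its tail in `α^H`, and the out-neighbourhood of `α` is `β^{H_α}`; since `H`
moves `α` to every tail, `Γ` has at most `n · |β^{H_α}|` arcs. If some pair `(γ, δ)` of distinct
points of `α^H` is not an arc, moving `γ` to `α` produces a point `ε ≠ α` of `α^H` with
`(α, ε)` not an arc, so `β^{H_α}` misses both `α` (as `β ≠ α`) and `ε`, whence `|β^{H_α}| ≤ n - 2`.
-/

section OrbitalGraph

omit [Fintype Ω] [DecidableEq Ω]

variable (H : Subgroup (Equiv.Perm Ω)) {α β : Ω}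

theorem self_mem_orb (α : Ω) : α ∈ orb H α :=
  ⟨1, H.one_mem, rfl⟩

theorem apply_mem_orb {g : Equiv.Perm Ω} (hg : g ∈ H) {γ : Ω} (hγ : γ ∈ orb H α) :
    g γ ∈ orb H α := by
  obtain ⟨h, hh, rfl⟩ := hγ
  exact ⟨g * h, H.mul_mem hg hh, rfl⟩

theorem apply_mem_orbArcs {g : Equiv.Perm Ω} (hg : g ∈ H) {γ δ : Ω}
    (hγδ : (γ, δ) ∈ orbArcs H α β) : (g γ, g δ) ∈ orbArcs H α β := by
  obtain ⟨h, hh, rfl, rfl⟩ := hγδ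
  exact ⟨g * h, H.mul_mem hg hh, rfl, rfl⟩

theorem stabOrb_subset_orb_diff (hab : α ≠ β) (hβ : β ∈ orb H α) :
    stabOrb H α β ⊆ orb H α \ {α} := by
  rintro _ ⟨h, hh, hhα, rfl⟩
  refine ⟨apply_mem_orb H hh hβ, fun hhβ => hab (h.injective ?_)⟩
  rw [hhα, hhβ]

variable [Finite Ω]

theorem ncard_orbArcs_le :
    (orbArcs H α β).ncard ≤ (orb H α).ncard * (stabOrb H α β).ncard := by
  have htransport : ∀ γ ∈ orb H α, ∃ g ∈ H, g α = γ := fun _ hγ => hγ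
  choose! σ hσH hσα using htransport
  have hsub : orbArcs H α β ⊆ (fun p => (p.1, σ p.1 p.2)) '' (orb H α ×ˢ stabOrb H α β) := by
    rintro ⟨_, _⟩ ⟨h, hh, rfl, rfl⟩
    have hhα : h α ∈ orb H α := ⟨h, hh, rfl⟩
    refine ⟨(h α, (σ (h α))⁻¹ (h β)), ⟨hhα, (σ (h α))⁻¹ * h, H.mul_mem (H.inv_mem (hσH _ hhα)) hh,
      ?_, rfl⟩, by simp⟩
    rw [Equiv.Perm.mul_apply, Equiv.Perm.inv_eq_iff_eq, hσα _ hhα]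
  calc (orbArcs H α β).ncard
      ≤ ((fun p => (p.1, σ p.1 p.2)) '' (orb H α ×ˢ stabOrb H α β)).ncard :=
        Set.ncard_le_ncard hsub (Set.toFinite _)
    _ ≤ (orb H α ×ˢ stabOrb H α β).ncard := Set.ncard_image_le (Set.toFinite _)
    _ = (orb H α).ncard * (stabOrb H α β).ncard := Set.ncard_prod

theorem ncard_stabOrb_le_of_notMem_orbArcs (hab : α ≠ β) (hβ : β ∈ orb H α) {ε : Ω}
    (hε : ε ∈ orb H α) (hεα : ε ≠ α) (hαε : (α, ε) ∉ orbArcs H α β) :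
    (stabOrb H α β).ncard ≤ (orb H α).ncard - 2 := by
  have hsub : stabOrb H α β ⊆ orb H α \ {α, ε} := fun γ hγ =>
    ⟨(stabOrb_subset_orb_diff H hab hβ hγ).1, by
      rintro (rfl | rfl)
      · exact (stabOrb_subset_orb_diff H hab hβ hγ).2 rfl
      · exact hαε hγ⟩
  have hpair : {α, ε} ⊆ orb H α := Set.insert_subset (self_mem_orb H α) (Set.singleton_subset_iff.2 hε)
  calc (stabOrb H α β).ncard ≤ (orb H α \ {α, ε}).ncard := Set.ncard_le_ncard hsub (Set.toFinite _)
    _ = (orb H α).ncard - 2 := by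
      rw [Set.ncard_sdiff hpair (Set.toFinite _), Set.ncard_pair hεα.symm]

end OrbitalGraph

/-- If `β ∈ α^H` and `Γ(H,Ω,(α,β))` has strictly more than `n(n-2)` arcs, where
`n = |α^H|`, then `Γ` is the complete digraph on `α^H`. -/
theorem many_arcs_complete (H : Subgroup (Equiv.Perm Ω)) (α β : Ω)
    (hab : α ≠ β) (hβ : β ∈ orb H α)
    (harcs : (orb H α).ncard * ((orb H α).ncard - 2) < (orbArcs H α β).ncard) :
    ∀ γ ∈ orb H α, ∀ δ ∈ orb H α, γ ≠ δ → (γ, δ) ∈ orbArcs H α β := by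
  rintro _ ⟨g, hg, rfl⟩ δ hδ hne
  by_contra hγδ
  have hαε : (α, g⁻¹ δ) ∉ orbArcs H α β := fun h => hγδ (by
    simpa using apply_mem_orbArcs H hg h)
  have hεα : g⁻¹ δ ≠ α := fun h => hne (Equiv.Perm.inv_eq_iff_eq.1 h).symm
  have hstab := ncard_stabOrb_le_of_notMem_orbArcs H hab hβ
    (apply_mem_orb H (H.inv_mem hg) hδ) hεα hαε
  have := (ncard_orbArcs_le H (α := α) (β := β)).trans (Nat.mul_le_mul_left _ hstab)
  omega
end
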